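/- arXiv:2108.07681 — 3 statements merged into one kernel-verified Lean document; each statement's English description precedes it below -/
import Mathlib

section
/- Let h, μ > 0 and m, n > -1 with m + n > -1, and fix T > 0. Then lim_{μ → ∞} sup_{t ∈ (0,T]} t^h ∫_0^1 s^m (1-s)^n e^{-μ t (1-s)} ds = 0. -/
open MeasureTheory intervalIntegral

lemma beta_ii (m n : ℝ) (hm : -1 < m) (hn : -1 < n) :
    IntervalIntegrable (fun s : ℝ => s ^ m * (1 - s) ^ n) volume 0 1 := by
  have h1 : IntervalIntegrable (fun s : ℝ => s ^ m * (1 - s) ^ n) volume 0 (1/2) := by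
    apply (intervalIntegrable_rpow' hm).mul_continuousOn
    apply ContinuousOn.rpow_const
    · exact (continuous_const.sub continuous_id).continuousOn
    · intro x hx
      left
      rw [Set.uIcc_of_le (by norm_num)] at hx
      have := hx.2
      intro hc
      nlinarith
  have h2 : IntervalIntegrable (fun s : ℝ => s ^ m * (1 - s) ^ n) volume (1/2) 1 := by
    have base : IntervalIntegrable (fun s : ℝ => (1 - s) ^ n) volume (1/2) 1 := by
      have := (intervalIntegrable_rpow' hn (a := 0) (b := 1/2)).comp_sub_left 1
      norm_num at this
      exact this.symm
    apply base.continuousOn_mul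
    apply ContinuousOn.rpow_const continuous_id.continuousOn
    intro x hx
    left
    rw [Set.uIcc_of_le (by norm_num)] at hx
    have := hx.1
    intro hc
    simp only [id] at hc
    nlinarith
  exact h1.trans h2

lemma wbeta_ii (m n c : ℝ) (hm : -1 < m) (hn : -1 < n) :
    IntervalIntegrable (fun s : ℝ => s ^ m * (1 - s) ^ n * Real.exp (c * (1 - s)))
      volume 0 1 := by
  apply (beta_ii m n hm hn).mul_continuousOn
  exact Continuous.continuousOn (by continuity)

theorem stmt_5 (h m n T : ℝ) (hh : 0 < h) (hm : -1 < m) (hn : -1 < n)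
    (hmn : -1 < m + n) (hT : 0 < T) :
    Filter.Tendsto
      (fun μ : ℝ => ⨆ t ∈ Set.Ioc (0:ℝ) T,
        t ^ h * ∫ s in (0:ℝ)..1, s ^ m * (1 - s) ^ n * Real.exp (-μ * t * (1 - s)))
      Filter.atTop (nhds 0) := by
  rw [NormedAddCommGroup.tendsto_nhds_zero]
  intro ε hε
  set B := ∫ s in (0:ℝ)..1, s ^ m * (1 - s) ^ n with hBdef
  have hB0 : 0 ≤ B := by
    apply intervalIntegral.integral_nonneg (by norm_num)
    intro s hs
    exact mul_nonneg (Real.rpow_nonneg hs.1 m) (Real.rpow_nonneg (by linarith [hs.2]) n)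
  -- choose δ
  set δ : ℝ := min T ((ε / (2 * (B + 1))) ^ (1/h)) with hδdef
  have hq : 0 < ε / (2 * (B + 1)) := by positivity
  have hδ0 : 0 < δ := lt_min hT (Real.rpow_pos_of_pos hq _)
  have hδT : δ ≤ T := min_le_left _ _
  have hδh : δ ^ h * B ≤ ε / 2 := by
    have h1 : δ ^ h ≤ ε / (2 * (B + 1)) := by
      have := Real.rpow_le_rpow hδ0.le (min_le_right T _) hh.le
      rwa [← Real.rpow_mul hq.le, one_div,
        inv_mul_cancel₀ (ne_of_gt hh), Real.rpow_one] at this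

    calc δ ^ h * B ≤ (ε / (2 * (B + 1))) * B := by
          exact mul_le_mul_of_nonneg_right h1 hB0
      _ ≤ ε / 2 := by
          rw [div_mul_eq_mul_div, div_le_div_iff₀ (by positivity) (by norm_num)]
          nlinarith
  -- dominated convergence for J
  have hJ : Filter.Tendsto
      (fun μ : ℝ => ∫ s in (0:ℝ)..1, s ^ m * (1 - s) ^ n * Real.exp (-μ * δ * (1 - s)))
      Filter.atTop (nhds 0) := by
    have key : Filter.Tendsto
        (fun μ : ℝ => ∫ s in (0:ℝ)..1, s ^ m * (1 - s) ^ n * Real.exp (-μ * δ * (1 - s)))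
        Filter.atTop (nhds (∫ s in (0:ℝ)..1, (0:ℝ))) := by
      refine intervalIntegral.tendsto_integral_filter_of_dominated_convergence
        (μ := volume) (a := (0:ℝ)) (b := (1:ℝ)) (l := (Filter.atTop : Filter ℝ))
        (F := fun (μ : ℝ) (s : ℝ) => s ^ m * (1 - s) ^ n * Real.exp (-μ * δ * (1 - s)))
        (f := fun _ => (0:ℝ)) (bound := fun s => s ^ m * (1 - s) ^ n) ?_ ?_ ?_ ?_
      · filter_upwards with μ
        rw [Set.uIoc_of_le (by norm_num : (0:ℝ) ≤ 1)]
        exact ((wbeta_ii m n (-μ*δ) hm hn).1).aestronglyMeasurable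
      · filter_upwards [Filter.eventually_ge_atTop (0:ℝ)] with μ hμ
        filter_upwards with s hs
        rw [Set.uIoc_of_le (by norm_num)] at hs
        have hs1 : 0 ≤ s := hs.1.le
        have hs2 : 0 ≤ 1 - s := by linarith [hs.2]
        have hnn : 0 ≤ s ^ m * (1 - s) ^ n :=
          mul_nonneg (Real.rpow_nonneg hs1 m) (Real.rpow_nonneg hs2 n)
        rw [Real.norm_eq_abs, abs_of_nonneg (mul_nonneg hnn (Real.exp_pos _).le)]
        have : Real.exp (-μ * δ * (1 - s)) ≤ 1 := by
          apply Real.exp_le_one_iff.mpr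
          nlinarith [mul_nonneg (mul_nonneg hμ hδ0.le) hs2]
        nlinarith
      · exact beta_ii m n hm hn
      · have hone : ∀ᵐ s : ℝ ∂volume, s ≠ 1 := by
          rw [ae_iff]
          refine measure_mono_null (t := {(1:ℝ)}) ?_ Real.volume_singleton
          intro x hx
          simpa using hx
        filter_upwards [hone] with s hs1 hs
        rw [Set.uIoc_of_le (by norm_num)] at hs
        have hs2 : 0 < 1 - s := lt_of_le_of_ne (by linarith [hs.2]) (by
          intro hc; exact hs1 (by linarith))
        have : Filter.Tendsto (fun μ : ℝ => Real.exp (-μ * δ * (1 - s)))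
            Filter.atTop (nhds 0) := by
          have : Filter.Tendsto (fun μ : ℝ => -μ * δ * (1 - s)) Filter.atTop Filter.atBot := by
            apply Filter.Tendsto.atBot_mul_const hs2
            apply Filter.Tendsto.atBot_mul_const hδ0
            exact Filter.tendsto_neg_atTop_atBot
          exact Real.tendsto_exp_atBot.comp this
        simpa using (this.const_mul (s ^ m * (1 - s) ^ n))
    simpa using key
  have hTh : (0:ℝ) < T ^ h := Real.rpow_pos_of_pos hT h
  have hJev : ∀ᶠ μ in Filter.atTop,
      (∫ s in (0:ℝ)..1, s ^ m * (1 - s) ^ n * Real.exp (-μ * δ * (1 - s))) ≤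
        ε / (2 * T ^ h) :=
    hJ.eventually (eventually_le_nhds (by positivity))
  filter_upwards [hJev, Filter.eventually_ge_atTop (0:ℝ)] with μ hμJ hμ0
  set J := ∫ s in (0:ℝ)..1, s ^ m * (1 - s) ^ n * Real.exp (-μ * δ * (1 - s)) with hJdef
  have hJ0 : 0 ≤ J := by
    apply intervalIntegral.integral_nonneg (by norm_num)
    intro s hs
    exact mul_nonneg (mul_nonneg (Real.rpow_nonneg hs.1 m)
      (Real.rpow_nonneg (by linarith [hs.2]) n)) (Real.exp_pos _).le
  -- pointwise bound for each t
  have key : ∀ t ∈ Set.Ioc (0:ℝ) T,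
      t ^ h * (∫ s in (0:ℝ)..1, s ^ m * (1 - s) ^ n * Real.exp (-μ * t * (1 - s))) ≤ ε / 2 := by
    intro t ht
    obtain ⟨ht0, htT⟩ := ht
    have hint : IntervalIntegrable
        (fun s : ℝ => s ^ m * (1 - s) ^ n * Real.exp (-μ * t * (1 - s))) volume 0 1 :=
      wbeta_ii m n (-μ*t) hm hn
    have hI0 : 0 ≤ ∫ s in (0:ℝ)..1, s ^ m * (1 - s) ^ n * Real.exp (-μ * t * (1 - s)) := by
      apply intervalIntegral.integral_nonneg (by norm_num)
      intro s hs
      exact mul_nonneg (mul_nonneg (Real.rpow_nonneg hs.1 m)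
        (Real.rpow_nonneg (by linarith [hs.2]) n)) (Real.exp_pos _).le
    rcases le_or_gt t δ with htδ | htδ
    · -- small t
      have hIB : (∫ s in (0:ℝ)..1, s ^ m * (1 - s) ^ n * Real.exp (-μ * t * (1 - s))) ≤ B := by
        apply intervalIntegral.integral_mono_on (by norm_num) hint (beta_ii m n hm hn)
        intro s hs
        have hs1 : 0 ≤ s := hs.1
        have hs2 : 0 ≤ 1 - s := by linarith [hs.2]
        have hnn : 0 ≤ s ^ m * (1 - s) ^ n :=
          mul_nonneg (Real.rpow_nonneg hs1 m) (Real.rpow_nonneg hs2 n)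
        have hexp : Real.exp (-μ * t * (1 - s)) ≤ 1 := by
          apply Real.exp_le_one_iff.mpr
          nlinarith [mul_nonneg (mul_nonneg hμ0 ht0.le) hs2]
        nlinarith
      have hth : t ^ h ≤ δ ^ h := Real.rpow_le_rpow ht0.le htδ hh.le
      calc t ^ h * _ ≤ δ ^ h * B :=
            mul_le_mul hth hIB hI0 (Real.rpow_nonneg hδ0.le h)
        _ ≤ ε / 2 := hδh
    · -- large t
      have hIJ : (∫ s in (0:ℝ)..1, s ^ m * (1 - s) ^ n * Real.exp (-μ * t * (1 - s))) ≤ J := by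
        apply intervalIntegral.integral_mono_on (by norm_num) hint (wbeta_ii m n (-μ*δ) hm hn)
        intro s hs
        have hs1 : 0 ≤ s := hs.1
        have hs2 : 0 ≤ 1 - s := by linarith [hs.2]
        have hnn : 0 ≤ s ^ m * (1 - s) ^ n :=
          mul_nonneg (Real.rpow_nonneg hs1 m) (Real.rpow_nonneg hs2 n)
        have hexp : Real.exp (-μ * t * (1 - s)) ≤ Real.exp (-μ * δ * (1 - s)) := by
          apply Real.exp_le_exp.mpr
          nlinarith [mul_nonneg (mul_nonneg hμ0 (sub_nonneg.mpr htδ.le)) hs2]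
        nlinarith [Real.exp_pos (-μ * t * (1 - s)), Real.exp_pos (-μ * δ * (1 - s))]
      have hth : t ^ h ≤ T ^ h := Real.rpow_le_rpow ht0.le htT hh.le
      calc t ^ h * _ ≤ T ^ h * J :=
            mul_le_mul hth hIJ hI0 hTh.le
        _ ≤ T ^ h * (ε / (2 * T ^ h)) := mul_le_mul_of_nonneg_left hμJ hTh.le
        _ = ε / 2 := by field_simp
  -- conclude for the sup
  have hSnn : 0 ≤ ⨆ t ∈ Set.Ioc (0:ℝ) T,
      t ^ h * ∫ s in (0:ℝ)..1, s ^ m * (1 - s) ^ n * Real.exp (-μ * t * (1 - s)) := by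
    apply Real.iSup_nonneg
    intro t
    apply Real.iSup_nonneg
    intro ht
    apply mul_nonneg (Real.rpow_nonneg ht.1.le h)
    apply intervalIntegral.integral_nonneg (by norm_num)
    intro s hs
    exact mul_nonneg (mul_nonneg (Real.rpow_nonneg hs.1 m)
      (Real.rpow_nonneg (by linarith [hs.2]) n)) (Real.exp_pos _).le
  have hSle : (⨆ t ∈ Set.Ioc (0:ℝ) T,
      t ^ h * ∫ s in (0:ℝ)..1, s ^ m * (1 - s) ^ n * Real.exp (-μ * t * (1 - s))) ≤ ε / 2 := by
    apply Real.iSup_le _ (by positivity)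
    intro t
    apply Real.iSup_le _ (by positivity)
    intro ht
    exact key t ht
  rw [Real.norm_eq_abs, abs_of_nonneg hSnn]
  linarith
end

section
/- Let (θ_k)_{k≥1} be an increasing sequence of positive reals with θ_1 > 0, let M > 0, and suppose |E(z)| ≤ M/(1+|z|) for all z ≥ 0 (the Mittag-Leffler bound). Then for any t > 0 and any square-summable coefficients (c_k), Σ_k θ_k^ν (E(θ_k t^α/(1+θ_k)))^2 c_k^2 ≤ 2M^2 (1 + θ_1^{-2}) t^{-2α} Σ_k θ_k^ν c_k^2, for any ν ∈ [0,1]. -/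
theorem stmt_8 (θ : ℕ → ℝ) (hθpos : ∀ k, 0 < θ k) (hθmono : StrictMono θ)
    (M : ℝ) (hM : 0 < M) (E : ℝ → ℝ) (hE : ∀ z : ℝ, 0 ≤ z → |E z| ≤ M / (1 + |z|))
    (α t ν : ℝ) (ht : 0 < t) (hν : ν ∈ Set.Icc (0:ℝ) 1)
    (c : ℕ → ℝ) (hc : Summable fun k => θ k ^ ν * c k ^ 2) :
    ∑' k, θ k ^ ν * (E (θ k * t ^ α / (1 + θ k))) ^ 2 * c k ^ 2 ≤
      2 * M ^ 2 * (1 + (θ 0) ^ (-2 : ℝ)) * t ^ (-(2 * α)) * ∑' k, θ k ^ ν * c k ^ 2 := by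
  set C : ℝ := 2 * M ^ 2 * (1 + (θ 0) ^ (-2 : ℝ)) * t ^ (-(2 * α)) with hCdef
  have htα : 0 < t ^ α := Real.rpow_pos_of_pos ht α
  have hθ0 := hθpos 0
  have hθ0inv : (θ 0) ^ (-2 : ℝ) = ((θ 0) ^ 2)⁻¹ := by
    rw [Real.rpow_neg hθ0.le, ← Real.rpow_natCast (θ 0) 2]; norm_num
  have htneg : t ^ (-(2 * α)) = ((t ^ α) ^ 2)⁻¹ := by
    rw [Real.rpow_neg ht.le, mul_comm 2 α, Real.rpow_mul ht.le,
      ← Real.rpow_natCast (t ^ α) 2]; norm_num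
  have key : ∀ k, θ k ^ ν * (E (θ k * t ^ α / (1 + θ k))) ^ 2 * c k ^ 2 ≤
      C * (θ k ^ ν * c k ^ 2) := by
    intro k
    have hθk := hθpos k
    have hθ0k : θ 0 ≤ θ k := hθmono.monotone (Nat.zero_le k)
    set z : ℝ := θ k * t ^ α / (1 + θ k) with hzdef
    have hz : 0 < z := by positivity
    have hEb : |E z| ≤ M / (1 + z) := by
      have := hE z hz.le
      rwa [abs_of_nonneg hz.le] at this
    have h1 : M / (1 + z) ≤ M / z := by
      apply div_le_div_of_nonneg_left hM.le hz; linarith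
    have hEz : |E z| ≤ M / z := hEb.trans h1
    have hEsq : (E z) ^ 2 ≤ (M / z) ^ 2 := by
      rw [← sq_abs]
      exact pow_le_pow_left₀ (abs_nonneg _) hEz 2
    have hMz : (M / z) ^ 2 = M ^ 2 * (1 + θ k) ^ 2 / ((θ k) ^ 2 * (t ^ α) ^ 2) := by
      rw [hzdef]; field_simp
    have hD : (M / z) ^ 2 ≤ 2 * M ^ 2 * (1 + (θ 0) ^ (-2 : ℝ)) * t ^ (-(2 * α)) := by
      rw [hMz, hθ0inv, htneg]
      rw [div_le_iff₀ (by positivity)]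
      have h2 : (1 + θ k) ^ 2 ≤ 2 * (1 + (θ k) ^ 2) := by nlinarith [sq_nonneg (1 - θ k)]
      have h3 : ((θ 0) ^ 2)⁻¹ ≥ ((θ k) ^ 2)⁻¹ := by
        apply inv_anti₀ (by positivity)
        nlinarith
      have h4 : (0:ℝ) < (θ k) ^ 2 := by positivity
      have h5 : ((θ k) ^ 2)⁻¹ * (θ k) ^ 2 = 1 := inv_mul_cancel₀ (ne_of_gt h4)
      have h6 : (0:ℝ) < ((t ^ α) ^ 2) := by positivity
      have h8 : (1:ℝ) ≤ ((θ 0) ^ 2)⁻¹ * (θ k) ^ 2 := by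
        calc (1:ℝ) = ((θ k) ^ 2)⁻¹ * (θ k) ^ 2 := h5.symm
          _ ≤ ((θ 0) ^ 2)⁻¹ * (θ k) ^ 2 := by
              exact mul_le_mul_of_nonneg_right h3 h4.le
      have hR : 2 * M ^ 2 * (1 + ((θ 0) ^ 2)⁻¹) * (((t ^ α) ^ 2)⁻¹) * ((θ k) ^ 2 * (t ^ α) ^ 2)
          = 2 * M ^ 2 * (1 + ((θ 0) ^ 2)⁻¹) * (θ k) ^ 2 := by
        field_simp
      rw [hR]
      nlinarith [mul_le_mul_of_nonneg_left h2 (sq_nonneg M),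
        mul_le_mul_of_nonneg_left h8 (sq_nonneg M)]
    have hnn : 0 ≤ θ k ^ ν * c k ^ 2 := by positivity
    calc θ k ^ ν * (E z) ^ 2 * c k ^ 2
        = (E z) ^ 2 * (θ k ^ ν * c k ^ 2) := by ring
      _ ≤ C * (θ k ^ ν * c k ^ 2) := by
          apply mul_le_mul_of_nonneg_right _ hnn
          exact hEsq.trans hD
  have hsumC : Summable fun k => C * (θ k ^ ν * c k ^ 2) := hc.mul_left C
  have hsumL : Summable fun k => θ k ^ ν * (E (θ k * t ^ α / (1 + θ k))) ^ 2 * c k ^ 2 := by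
    apply Summable.of_nonneg_of_le (fun k =>
      mul_nonneg (mul_nonneg (Real.rpow_nonneg (hθpos k).le ν) (sq_nonneg _)) (sq_nonneg _))
      key hsumC
  calc ∑' k, θ k ^ ν * (E (θ k * t ^ α / (1 + θ k))) ^ 2 * c k ^ 2
      ≤ ∑' k, C * (θ k ^ ν * c k ^ 2) := Summable.tsum_le_tsum key hsumL hsumC
    _ = C * ∑' k, θ k ^ ν * c k ^ 2 := tsum_mul_left
end

section
/- Let α ∈ (0,1), T > 0, m, n > 0, and w ∈ L^∞((0,T]) a nonnegative function satisfying w(t) ≤ m + n ∫_0^t (t-τ)^{α-1} w(τ) dτ for all t ∈ (0,T]. Then w(t) ≤ m E_α(n Γ(α) t^α) for all t ∈ (0,T], where E_α(z) = Σ_{k≥0} z^k / Γ(αk+1). -/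
/-!
Iterating the hypothesis is Picard iteration for the Abel operator
`A f t = ∫₀ᵗ (t - τ)^(α-1) f τ dτ`. By the Beta integral, `n • A` maps the `k`-th term
`(n Γ(α) t^α)^k / Γ(αk + 1)` of the Mittag-Leffler series to the `(k+1)`-st, so `k` iterations
starting from `w ≤ C` give `w ≤ m (S₀ + ⋯ + S_{k-1}) + C S_k`. Since `Γ(αk + 1)` outgrows every
geometric sequence, the series converges, `S_k → 0`, and the partial sums are at most `E_α`.
-/

open MeasureTheory intervalIntegral

/-- The one-parameter Mittag-Leffler function `E_α(z) = ∑_{k≥0} z^k / Γ(αk + 1)`. -/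
noncomputable def mittagLefflerOne (α z : ℝ) : ℝ :=
  ∑' k : ℕ, z ^ k / Real.Gamma (α * k + 1)

open Real Set Filter Topology

lemma rpow_sub_one_le_exp_mul_Gamma_add_one {M s : ℝ} (hM : 1 ≤ M) (hs : 1 ≤ s) :
    M ^ (s - 1) ≤ exp M * Gamma (s + 1) := by
  set N := ⌊s⌋₊
  have hN : (1 : ℝ) ≤ N := by exact_mod_cast Nat.le_floor (by exact_mod_cast hs)
  calc M ^ (s - 1) ≤ M ^ (N : ℝ) :=
        rpow_le_rpow_of_exponent_le hM (by linarith [Nat.lt_floor_add_one s])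
    _ ≤ exp M * N.factorial := by
        rw [rpow_natCast, ← div_le_iff₀ (by positivity)]
        exact pow_div_factorial_le_exp M (by linarith) N
    _ = exp M * Gamma (N + 1) := by rw [Gamma_nat_eq_factorial]
    _ ≤ exp M * Gamma (s + 1) := by
        gcongr
        exact Gamma_strictMonoOn_Ici.monotoneOn (by simp; linarith) (by simp; linarith)
          (by linarith [Nat.floor_le (by linarith : (0:ℝ) ≤ s)])

lemma summable_pow_div_Gamma_mul_add_one {α : ℝ} (hα : 0 < α) (x : ℝ) :
    Summable fun k : ℕ => x ^ k / Gamma (α * k + 1) := by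
  set y := 2 * |x| + 1
  have hy : 1 ≤ y := by simp only [y]; linarith [abs_nonneg x]
  -- `M ^ α = y` turns the Gamma bound into a geometric one with ratio `|x| / y ≤ 1 / 2`.
  set M := y ^ α⁻¹
  have hM : 1 ≤ M := one_le_rpow hy (by positivity)
  have hMα : M ^ α = y := rpow_inv_rpow (by positivity) hα.ne'
  refine .of_norm_bounded_eventually_nat
    (summable_geometric_two.mul_left (M * exp M)) ?_
  filter_upwards [eventually_ge_atTop ⌈α⁻¹⌉₊] with k hk
  have hαk : 1 ≤ α * k := by
    rw [← div_le_iff₀' hα, one_div]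
    exact (Nat.le_ceil _).trans (by exact_mod_cast hk)
  have hΓ : 0 < Gamma (α * k + 1) := by positivity
  have hyk : y ^ k ≤ M * exp M * Gamma (α * k + 1) := by
    have := rpow_sub_one_le_exp_mul_Gamma_add_one hM hαk
    rw [rpow_sub_one (by positivity), rpow_mul (by positivity), hMα, rpow_natCast,
      div_le_iff₀ (by positivity)] at this
    linarith [show exp M * Gamma (α * k + 1) * M = M * exp M * Gamma (α * k + 1) by ring]
  have hxk : |x| ^ k * 2 ^ k ≤ y ^ k := by
    rw [← mul_pow]; exact pow_le_pow_left₀ (by positivity) (by linarith) k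
  rw [norm_div, norm_pow, Real.norm_eq_abs, Real.norm_eq_abs, abs_of_pos hΓ,
    div_le_iff₀ hΓ, one_div, inv_pow]
  calc |x| ^ k = |x| ^ k * 2 ^ k * (2 ^ k)⁻¹ := by field_simp
    _ ≤ M * exp M * Gamma (α * k + 1) * (2 ^ k)⁻¹ :=
          mul_le_mul_of_nonneg_right (hxk.trans hyk) (by positivity)
    _ = _ := by ring

lemma integral_sub_rpow_mul_rpow {a b t : ℝ} (ha : 0 < a) (hb : 0 < b) (ht : 0 < t) :
    ∫ x in (0:ℝ)..t, (t - x) ^ (a - 1) * x ^ (b - 1) =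
      Gamma a * Gamma b / Gamma (a + b) * t ^ (a + b - 1) := by
  have hbeta := Complex.Gamma_mul_Gamma_eq_betaIntegral
    (s := (b : ℂ)) (t := (a : ℂ)) (by simpa using hb) (by simpa using ha)
  simp only [← Complex.ofReal_add, Complex.Gamma_ofReal] at hbeta
  have hΓ : (Gamma (b + a) : ℂ) ≠ 0 := by exact_mod_cast (Gamma_pos_of_pos (by linarith)).ne'
  have hB : Complex.betaIntegral b a = ((Gamma a * Gamma b / Gamma (a + b) : ℝ) : ℂ) := by
    rw [add_comm a b, Complex.ofReal_div, eq_div_iff hΓ, mul_comm, ← hbeta]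
    push_cast; ring
  apply Complex.ofReal_injective
  calc ((∫ x in (0:ℝ)..t, (t - x) ^ (a - 1) * x ^ (b - 1) : ℝ) : ℂ)
      = ∫ x in (0:ℝ)..t, (x : ℂ) ^ ((b : ℂ) - 1) * ((t : ℂ) - x) ^ ((a : ℂ) - 1) := by
        rw [← intervalIntegral.integral_ofReal]
        refine intervalIntegral.integral_congr fun x hx => ?_
        rw [uIcc_of_le ht.le] at hx
        push_cast [Complex.ofReal_cpow hx.1, Complex.ofReal_cpow (sub_nonneg.2 hx.2)]
        ring
    _ = (t : ℂ) ^ ((b : ℂ) + a - 1) * Complex.betaIntegral b a :=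
        Complex.betaIntegral_scaled _ _ ht
    _ = _ := by
        rw [hB, Complex.ofReal_mul, Complex.ofReal_cpow ht.le]
        push_cast
        ring_nf

-- `Γ(α)⁻¹ • abelIntegral α` is the Riemann–Liouville integral of order `α`.
noncomputable def abelIntegral (α : ℝ) (f : ℝ → ℝ) (t : ℝ) : ℝ :=
  ∫ τ in (0:ℝ)..t, (t - τ) ^ (α - 1) * f τ

section abelIntegral

variable {α t : ℝ}

lemma abelIntegral_rpow {β : ℝ} (hα : 0 < α) (hβ : -1 < β) (ht : 0 < t) :
    abelIntegral α (fun τ => τ ^ β) t =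
      Gamma α * Gamma (β + 1) / Gamma (α + β + 1) * t ^ (α + β) := by
  have h := integral_sub_rpow_mul_rpow hα (by linarith : 0 < β + 1) ht
  rw [add_sub_cancel_right, ← add_assoc, add_sub_cancel_right] at h
  exact h

lemma intervalIntegrable_abelKernel_mul {f : ℝ → ℝ} {C : ℝ} (hα : 0 < α) (ht : 0 ≤ t)
    (hf : AEStronglyMeasurable f (volume.restrict (Ioc 0 t))) (hC : ∀ τ ∈ Ioc 0 t, |f τ| ≤ C) :
    IntervalIntegrable (fun τ => (t - τ) ^ (α - 1) * f τ) volume 0 t := by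
  have hker : IntervalIntegrable (fun τ => (t - τ) ^ (α - 1)) volume 0 t := by
    simpa using ((intervalIntegral.intervalIntegrable_rpow' (a := 0) (b := t)
      (by linarith : -1 < α - 1)).comp_sub_left t).symm
  rw [intervalIntegrable_iff_integrableOn_Ioc_of_le ht] at hker ⊢
  exact hker.mul_bdd hf ((ae_restrict_iff' measurableSet_Ioc).2 (ae_of_all _ hC))

lemma abelIntegral_mono_on {f g : ℝ → ℝ} (ht : 0 ≤ t)
    (hf : IntervalIntegrable (fun τ => (t - τ) ^ (α - 1) * f τ) volume 0 t)
    (hg : IntervalIntegrable (fun τ => (t - τ) ^ (α - 1) * g τ) volume 0 t)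
    (hfg : ∀ τ ∈ Ioo 0 t, f τ ≤ g τ) :
    abelIntegral α f t ≤ abelIntegral α g t :=
  intervalIntegral.integral_mono_on_of_le_Ioo ht hf hg fun τ hτ =>
    mul_le_mul_of_nonneg_left (hfg τ hτ) (rpow_nonneg (by linarith [hτ.2]) _)

end abelIntegral

noncomputable def mittagLefflerTerm (α n : ℝ) (k : ℕ) (t : ℝ) : ℝ :=
  (n * Gamma α * t ^ α) ^ k / Gamma (α * k + 1)

section mittagLefflerTerm

variable {α n t : ℝ}

@[simp]
lemma mittagLefflerTerm_zero : mittagLefflerTerm α n 0 t = 1 := by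
  simp [mittagLefflerTerm]

lemma mittagLefflerTerm_nonneg (hα : 0 < α) (hn : 0 ≤ n) (ht : 0 ≤ t) (k : ℕ) :
    0 ≤ mittagLefflerTerm α n k t := by
  have := Gamma_pos_of_pos hα
  unfold mittagLefflerTerm
  positivity

lemma mittagLefflerTerm_le (hα : 0 < α) (hn : 0 ≤ n) {τ : ℝ} (hτ : 0 ≤ τ) (hτt : τ ≤ t)
    (k : ℕ) : mittagLefflerTerm α n k τ ≤ mittagLefflerTerm α n k t := by
  have := Gamma_pos_of_pos hα
  unfold mittagLefflerTerm
  gcongr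

lemma summable_mittagLefflerTerm (hα : 0 < α) (n t : ℝ) :
    Summable fun k => mittagLefflerTerm α n k t :=
  summable_pow_div_Gamma_mul_add_one hα _

lemma intervalIntegrable_abelKernel_mul_mittagLefflerTerm (hα : 0 < α) (hn : 0 ≤ n)
    (ht : 0 ≤ t) (k : ℕ) :
    IntervalIntegrable (fun τ => (t - τ) ^ (α - 1) * mittagLefflerTerm α n k τ) volume 0 t :=
  intervalIntegrable_abelKernel_mul hα ht
    (by unfold mittagLefflerTerm; fun_prop) fun τ hτ => by
      rw [abs_of_nonneg (mittagLefflerTerm_nonneg hα hn hτ.1.le k)]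
      exact mittagLefflerTerm_le hα hn hτ.1.le hτ.2 k

lemma mul_abelIntegral_mittagLefflerTerm (hα : 0 < α) (ht : 0 < t) (k : ℕ) :
    n * abelIntegral α (mittagLefflerTerm α n k) t = mittagLefflerTerm α n (k + 1) t := by
  have hterm : ∀ τ ∈ uIcc 0 t, (t - τ) ^ (α - 1) * mittagLefflerTerm α n k τ =
      (n * Gamma α) ^ k / Gamma (α * k + 1) * ((t - τ) ^ (α - 1) * τ ^ (α * k)) := by
    intro τ hτ
    rw [uIcc_of_le ht.le] at hτ
    rw [mittagLefflerTerm, mul_pow, ← rpow_natCast (τ ^ α), ← rpow_mul hτ.1]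
    ring
  have hΓ := Gamma_pos_of_pos hα
  have hΓk : 0 < Gamma (α * k + 1) := by positivity
  have hβ : -1 < α * k := by nlinarith [(Nat.cast_nonneg k : (0:ℝ) ≤ k)]
  have hpow := abelIntegral_rpow hα hβ ht
  rw [abelIntegral] at hpow ⊢
  rw [intervalIntegral.integral_congr hterm, intervalIntegral.integral_const_mul, hpow]
  have hexp : α + α * k = α * ((k + 1 : ℕ) : ℝ) := by push_cast; ring
  rw [mittagLefflerTerm, hexp, mul_pow (n * Gamma α), ← rpow_natCast (t ^ α),
    ← rpow_mul ht.le]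
  field_simp
  ring

end mittagLefflerTerm

noncomputable def picardBound (α n m C : ℝ) (k : ℕ) (t : ℝ) : ℝ :=
  m * ∑ j ∈ Finset.range k, mittagLefflerTerm α n j t + C * mittagLefflerTerm α n k t

section picardBound

variable {α n m C t : ℝ}

lemma abelKernel_mul_picardBound (k : ℕ) :
    (fun τ => (t - τ) ^ (α - 1) * picardBound α n m C k τ) = fun τ =>
      m * ∑ j ∈ Finset.range k, (t - τ) ^ (α - 1) * mittagLefflerTerm α n j τ +
        C * ((t - τ) ^ (α - 1) * mittagLefflerTerm α n k τ) := by
  ext τ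
  simp only [picardBound, mul_add, Finset.mul_sum, mul_left_comm]

lemma intervalIntegrable_abelKernel_mul_picardBound (hα : 0 < α) (hn : 0 ≤ n) (ht : 0 ≤ t)
    (k : ℕ) :
    IntervalIntegrable (fun τ => (t - τ) ^ (α - 1) * picardBound α n m C k τ) volume 0 t := by
  have hterm := intervalIntegrable_abelKernel_mul_mittagLefflerTerm hα hn ht
  rw [abelKernel_mul_picardBound]
  refine .add (.const_mul ?_ m) ((hterm k).const_mul C)
  simpa only [Finset.sum_fn] using IntervalIntegrable.sum _ fun j _ => hterm j

lemma picardBound_zero : picardBound α n m C 0 t = C := by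
  simp [picardBound]

lemma picardBound_succ (hα : 0 < α) (hn : 0 ≤ n) (ht : 0 < t) (k : ℕ) :
    picardBound α n m C (k + 1) t = m + n * abelIntegral α (picardBound α n m C k) t := by
  have hterm := intervalIntegrable_abelKernel_mul_mittagLefflerTerm hα hn ht.le
  have hsum : IntervalIntegrable
      (fun τ => ∑ j ∈ Finset.range k, (t - τ) ^ (α - 1) * mittagLefflerTerm α n j τ) volume 0 t := by
    simpa only [Finset.sum_fn] using IntervalIntegrable.sum _ fun j _ => hterm j
  rw [abelIntegral, abelKernel_mul_picardBound,
    intervalIntegral.integral_add (hsum.const_mul m) ((hterm k).const_mul C),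
    intervalIntegral.integral_const_mul, intervalIntegral.integral_const_mul,
    intervalIntegral.integral_finsetSum fun j _ => hterm j]
  have hstep (j : ℕ) := mul_abelIntegral_mittagLefflerTerm (n := n) hα ht j
  simp only [abelIntegral] at hstep
  rw [mul_add, mul_left_comm n m, mul_left_comm n C, Finset.mul_sum]
  simp only [hstep]
  rw [picardBound, Finset.sum_range_succ', mittagLefflerTerm_zero]
  ring

end picardBound

lemma le_picardBound {α T m n C : ℝ} {w : ℝ → ℝ} (hα : 0 < α) (hn : 0 ≤ n)
    (hw : Measurable w) (hwC : ∀ t ∈ Ioc 0 T, |w t| ≤ C)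
    (hineq : ∀ t ∈ Ioc 0 T, w t ≤ m + n * abelIntegral α w t) (k : ℕ) :
    ∀ t ∈ Ioc 0 T, w t ≤ picardBound α n m C k t := by
  induction k with
  | zero => exact fun t ht => picardBound_zero (α := α) ▸ (le_abs_self _).trans (hwC t ht)
  | succ k ih =>
    intro t ht
    have hsub : Ioc 0 t ⊆ Ioc 0 T := Ioc_subset_Ioc_right ht.2
    have hwint := intervalIntegrable_abelKernel_mul hα ht.1.le hw.aestronglyMeasurable
      fun τ hτ => hwC τ (hsub hτ)
    calc w t ≤ m + n * abelIntegral α w t := hineq t ht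
      _ ≤ m + n * abelIntegral α (picardBound α n m C k) t := by
        gcongr
        exact abelIntegral_mono_on ht.1.le hwint
          (intervalIntegrable_abelKernel_mul_picardBound hα hn ht.1.le k)
          fun τ hτ => ih τ (hsub (Ioo_subset_Ioc_self hτ))
      _ = picardBound α n m C (k + 1) t := (picardBound_succ hα hn ht.1 k).symm

theorem stmt_10_general (α T m n : ℝ) (hα : α ∈ Set.Ioo (0:ℝ) 1)
    (hm : 0 < m) (hn : 0 < n) (w : ℝ → ℝ) (hmeas : Measurable w)
    (hnonneg : ∀ t ∈ Set.Ioc (0:ℝ) T, 0 ≤ w t)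
    (hbdd : ∃ C : ℝ, ∀ t ∈ Set.Ioc (0:ℝ) T, w t ≤ C)
    (hineq : ∀ t ∈ Set.Ioc (0:ℝ) T,
      w t ≤ m + n * ∫ τ in (0:ℝ)..t, (t - τ) ^ (α - 1) * w τ) :
    ∀ t ∈ Set.Ioc (0:ℝ) T,
      w t ≤ m * mittagLefflerOne α (n * Real.Gamma α * t ^ α) := by
  intro t ht
  obtain ⟨C, hC⟩ := hbdd
  have hwC : ∀ t ∈ Ioc 0 T, |w t| ≤ C := fun t ht =>
    abs_le.2 ⟨by linarith [hnonneg t ht, hC t ht], hC t ht⟩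
  have hsum := summable_mittagLefflerTerm hα.1 n t
  have hbound (k : ℕ) : w t ≤ m * mittagLefflerOne α (n * Gamma α * t ^ α) +
      C * mittagLefflerTerm α n k t := by
    refine (le_picardBound hα.1 hn.le hmeas hwC hineq k t ht).trans ?_
    rw [picardBound]
    gcongr
    exact hsum.sum_le_tsum _ fun j _ => mittagLefflerTerm_nonneg hα.1 hn.le ht.1.le j
  have hlim : Tendsto (fun k => m * mittagLefflerOne α (n * Gamma α * t ^ α) +
      C * mittagLefflerTerm α n k t) atTop (𝓝 (m * mittagLefflerOne α (n * Gamma α * t ^ α))) := by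
    simpa using tendsto_const_nhds.add (hsum.tendsto_atTop_zero.const_mul C)
  exact ge_of_tendsto' hlim hbound

theorem stmt_10 (α T m n : ℝ) (hα : α ∈ Set.Ioo (0:ℝ) 1) (hT : 0 < T)
    (hm : 0 < m) (hn : 0 < n) (w : ℝ → ℝ) (hmeas : Measurable w)
    (hnonneg : ∀ t ∈ Set.Ioc (0:ℝ) T, 0 ≤ w t)
    (hbdd : ∃ C : ℝ, ∀ t ∈ Set.Ioc (0:ℝ) T, w t ≤ C)
    (hineq : ∀ t ∈ Set.Ioc (0:ℝ) T,
      w t ≤ m + n * ∫ τ in (0:ℝ)..t, (t - τ) ^ (α - 1) * w τ) :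
    ∀ t ∈ Set.Ioc (0:ℝ) T,
      w t ≤ m * mittagLefflerOne α (n * Real.Gamma α * t ^ α) :=
  stmt_10_general α T m n hα hm hn w hmeas hnonneg hbdd hineq
end
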